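/- Let G be a finite group, N ⊴ G, and B = bᴳ, C = cᴳ conjugacy classes of elements of N with gcd(|B|,|C|) = 1 and |B| < |C|. If no G-conjugacy class D of an element of N satisfies that |D| shares a prime factor with both |B| and |C| (i.e., B and C are at distance at least 3 in the graph Γ_G(N)), then |BC| = |C| and C·B·B⁻¹ = C. -/
import Mathlib

open scoped Pointwise

/-- The `G`-conjugacy class of `b`, as a set. -/
def gclass {G : Type*} [Group G] (b : G) : Set G := {y | ∃ g : G, g * b * g⁻¹ = y}

section aux

variable {G : Type*} [Group G]

lemma gclass_self (b : G) : b ∈ gclass b := ⟨1, by simp⟩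

lemma gclass_conj_mem {b x : G} (hx : x ∈ gclass b) (g : G) : g * x * g⁻¹ ∈ gclass b := by
  obtain ⟨h, rfl⟩ := hx
  exact ⟨g * h, by group⟩

lemma gclass_eq_of_mem {b x : G} (hx : x ∈ gclass b) : gclass x = gclass b := by
  obtain ⟨h, rfl⟩ := hx
  ext w
  constructor
  · rintro ⟨g, rfl⟩; exact ⟨g * h, by group⟩
  · rintro ⟨g, rfl⟩; exact ⟨g * h⁻¹, by group⟩

lemma gclass_eq_orbit (x : G) : gclass x = MulAction.orbit (ConjAct G) x := by
  ext y
  constructor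
  · rintro ⟨g, rfl⟩
    exact ⟨ConjAct.toConjAct g, by simp [ConjAct.toConjAct_smul]⟩
  · rintro ⟨g, rfl⟩
    exact ⟨ConjAct.ofConjAct g, by simp [ConjAct.smul_def]⟩

lemma card_gclass_eq_index (x : G) :
    Nat.card (gclass x) = (MulAction.stabilizer (ConjAct G) x).index := by
  rw [gclass_eq_orbit, MulAction.index_stabilizer, Nat.card_coe_set_eq]

lemma card_gclass_inv (x : G) : Nat.card (gclass x⁻¹) = Nat.card (gclass x) := by
  have h : gclass x⁻¹ = (gclass x)⁻¹ := by
    ext w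
    constructor
    · rintro ⟨g, rfl⟩
      exact Set.mem_inv.mpr ⟨g, by group⟩
    · intro hw
      obtain ⟨g, hg⟩ := Set.mem_inv.mp hw
      exact ⟨g, by rw [show g * x⁻¹ * g⁻¹ = (g * x * g⁻¹)⁻¹ from by group, hg, inv_inv]⟩
  rw [h, Set.natCard_inv]

lemma stab_mul_le (x y : G) :
    MulAction.stabilizer (ConjAct G) x ⊓ MulAction.stabilizer (ConjAct G) y ≤
      MulAction.stabilizer (ConjAct G) (x * y) := by
  intro h hh
  obtain ⟨hx, hy⟩ := Subgroup.mem_inf.mp hh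
  rw [MulAction.mem_stabilizer_iff] at hx hy ⊢
  rw [smul_mul', hx, hy]

variable [Finite G]

lemma index_inf_eq_mul (H K : Subgroup G) (hcop : Nat.Coprime H.index K.index) :
    (H ⊓ K).index = H.index * K.index := by
  have h3 : H.index * K.index ∣ (H ⊓ K).index :=
    Nat.Coprime.mul_dvd_of_dvd_of_dvd hcop
      (Subgroup.index_dvd_of_le inf_le_left) (Subgroup.index_dvd_of_le inf_le_right)
  have h5 : (H ⊓ K).index ≠ 0 := Subgroup.index_ne_zero_of_finite
  exact le_antisymm (Subgroup.index_inf_le)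
    (Nat.le_of_dvd (Nat.pos_of_ne_zero h5) h3)

lemma exists_mul_decomp (H K : Subgroup G) (hcop : Nat.Coprime H.index K.index) (g : G) :
    ∃ h ∈ H, ∃ k ∈ K, g = h * k := by
  set f : G ⧸ (H ⊓ K) → (G ⧸ H) × (G ⧸ K) :=
    fun q => (Subgroup.quotientMapOfLE inf_le_left q, Subgroup.quotientMapOfLE inf_le_right q)
    with hf
  have hinj : Function.Injective f := by
    intro q1 q2
    induction q1 using QuotientGroup.induction_on with
    | H a =>
    induction q2 using QuotientGroup.induction_on with
    | H b =>
    intro h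
    rw [hf, Prod.ext_iff] at h
    simp only [Subgroup.quotientMapOfLE_apply_mk, QuotientGroup.eq] at h
    exact QuotientGroup.eq.mpr (Subgroup.mem_inf.mpr h)
  have hcard : Nat.card (G ⧸ (H ⊓ K)) = Nat.card ((G ⧸ H) × (G ⧸ K)) := by
    rw [Nat.card_prod, ← Subgroup.index_eq_card, ← Subgroup.index_eq_card,
      ← Subgroup.index_eq_card, index_inf_eq_mul H K hcop]
  have hbij : Function.Bijective f :=
    (Nat.bijective_iff_injective_and_card f).mpr ⟨hinj, hcard⟩
  obtain ⟨q, hq⟩ := hbij.surjective (((1 : G) : G ⧸ H), (g : G ⧸ K))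
  obtain ⟨u, rfl⟩ := QuotientGroup.mk_surjective q
  rw [hf, Prod.ext_iff] at hq
  simp only [Subgroup.quotientMapOfLE_apply_mk] at hq
  have hu : u ∈ H := by
    have := QuotientGroup.eq.mp hq.1
    simpa using (inv_mem_iff.mp (by simpa using this))
  have hk : u⁻¹ * g ∈ K := QuotientGroup.eq.mp hq.2
  exact ⟨u, hu, u⁻¹ * g, hk, by group⟩

lemma card_gclass_mul_dvd (x y : G)
    (h : Nat.Coprime (Nat.card (gclass x)) (Nat.card (gclass y))) :
    Nat.card (gclass (x * y)) ∣ Nat.card (gclass x) * Nat.card (gclass y) := by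
  haveI : Finite (ConjAct G) := Finite.of_equiv G ConjAct.toConjAct.toEquiv
  simp only [card_gclass_eq_index] at h ⊢
  calc (MulAction.stabilizer (ConjAct G) (x * y)).index
      ∣ (MulAction.stabilizer (ConjAct G) x ⊓ MulAction.stabilizer (ConjAct G) y).index :=
        Subgroup.index_dvd_of_le (stab_mul_le x y)
    _ = _ := index_inf_eq_mul _ _ h

lemma conj_absorb {x z : G}
    (h : Nat.Coprime (Nat.card (gclass x)) (Nat.card (gclass z))) (g : G) :
    ∃ t : G, t * x * t⁻¹ = x ∧ g * z * g⁻¹ = t * z * t⁻¹ := by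
  haveI : Finite (ConjAct G) := Finite.of_equiv G ConjAct.toConjAct.toEquiv
  simp only [card_gclass_eq_index] at h
  obtain ⟨h1, hh1, k, hk, hdec⟩ := exists_mul_decomp _ _ h (ConjAct.toConjAct g)
  rw [MulAction.mem_stabilizer_iff] at hh1 hk
  refine ⟨ConjAct.ofConjAct h1, ?_, ?_⟩
  · rw [← ConjAct.smul_def, hh1]
  · rw [← ConjAct.toConjAct_smul, hdec, mul_smul, hk, ConjAct.smul_def]

end aux

theorem stmt2 {G : Type*} [Group G] [Finite G] (N : Subgroup G) (hN : N.Normal)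
    (b c : G) (hb : b ∈ N) (hc : c ∈ N)
    (hbnc : 1 < Nat.card (gclass b)) (hcnc : 1 < Nat.card (gclass c))
    (hcop : Nat.Coprime (Nat.card (gclass b)) (Nat.card (gclass c)))
    (hlt : Nat.card (gclass b) < Nat.card (gclass c))
    (hdist : ∀ d ∈ N, ¬ (¬ Nat.Coprime (Nat.card (gclass d)) (Nat.card (gclass b)) ∧
        ¬ Nat.Coprime (Nat.card (gclass d)) (Nat.card (gclass c)))) :
    Nat.card (gclass b * gclass c) = Nat.card (gclass c) ∧
    gclass c * gclass b * (gclass b)⁻¹ = gclass c := by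
  have memN : ∀ x ∈ gclass b, x ∈ N := by
    rintro x ⟨g, rfl⟩; exact hN.conj_mem b hb g
  have memNc : ∀ y ∈ gclass c, y ∈ N := by
    rintro y ⟨g, rfl⟩; exact hN.conj_mem c hc g
  -- Step 1
  have key : ∀ x ∈ gclass b, ∀ y ∈ gclass c,
      Nat.Coprime (Nat.card (gclass (x * y))) (Nat.card (gclass b)) := by
    intro x hx y hy
    have hxb : gclass x = gclass b := gclass_eq_of_mem hx
    have hyc : gclass y = gclass c := gclass_eq_of_mem hy
    have hdvd : Nat.card (gclass (x * y)) ∣ Nat.card (gclass b) * Nat.card (gclass c) := by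
      have := card_gclass_mul_dvd x y (by rw [hxb, hyc]; exact hcop)
      rwa [hxb, hyc] at this
    have hzN : x * y ∈ N := mul_mem (memN x hx) (memNc y hy)
    rcases not_and_or.mp (hdist (x * y) hzN) with hA | hB
    · exact not_not.mp hA
    · exfalso
      have hBC : Nat.Coprime (Nat.card (gclass (x * y))) (Nat.card (gclass c)) := not_not.mp hB
      have h1 : Nat.card (gclass (x * y * y⁻¹)) ∣
          Nat.card (gclass (x * y)) * Nat.card (gclass y⁻¹) :=
        card_gclass_mul_dvd _ _ (by rw [card_gclass_inv, hyc]; exact hBC)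
      rw [mul_inv_cancel_right, hxb, card_gclass_inv, hyc] at h1
      have hBnD : Nat.card (gclass b) ∣ Nat.card (gclass (x * y)) :=
        hcop.dvd_of_dvd_mul_right h1
      have hDBn : Nat.card (gclass (x * y)) ∣ Nat.card (gclass b) :=
        hBC.dvd_of_dvd_mul_right hdvd
      have hD : Nat.card (gclass (x * y)) = Nat.card (gclass b) :=
        Nat.dvd_antisymm hDBn hBnD
      -- the class of x*y fills (· * y) '' gclass b
      have hsub : gclass (x * y) ⊆ (· * y) '' gclass b := by
        rintro w ⟨g, rfl⟩
        obtain ⟨t, hty, htz⟩ := conj_absorb (x := y) (z := x * y)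
          (by rw [hyc]; exact hBC.symm) g
        refine ⟨t * x * t⁻¹, gclass_conj_mem hx t, ?_⟩
        show (t * x * t⁻¹) * y = g * (x * y) * g⁻¹
        rw [htz, show t * (x * y) * t⁻¹ = (t * x * t⁻¹) * (t * y * t⁻¹) from by group, hty]
      have hcardBy : Nat.card ((· * y) '' gclass b) = Nat.card (gclass b) :=
        Nat.card_image_of_injective (mul_left_injective y) _
      have hfull : gclass (x * y) = (· * y) '' gclass b := by
        apply Set.eq_of_subset_of_ncard_le hsub _ (Set.toFinite _)
        apply le_of_eq
        rw [← Nat.card_coe_set_eq, ← Nat.card_coe_set_eq, hcardBy, hD]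
      have htrans : ∀ y' ∈ gclass c, (· * y') '' gclass b ⊆ gclass (x * y) := by
        intro y' hy'
        have hyy : y' ∈ gclass y := hyc ▸ hy'
        obtain ⟨g, rfl⟩ := hyy
        rintro w ⟨x'', hx'', rfl⟩
        have hmem : (g⁻¹ * x'' * g) * y ∈ (· * y) '' gclass b :=
          ⟨g⁻¹ * x'' * g, by simpa using gclass_conj_mem hx'' g⁻¹, rfl⟩
        rw [← hfull] at hmem
        have h3 := gclass_conj_mem hmem g
        show x'' * (g * y * g⁻¹) ∈ gclass (x * y)
        rw [show x'' * (g * y * g⁻¹) = g * ((g⁻¹ * x'' * g) * y) * g⁻¹ from by group]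
        exact h3
      have hinj : (x * ·) '' gclass c ⊆ gclass (x * y) := by
        rintro w ⟨y', hy', rfl⟩
        exact htrans y' hy' ⟨x, hx, rfl⟩
      have hle : Nat.card (gclass c) ≤ Nat.card (gclass b) := by
        have h2 : Nat.card ((x * ·) '' gclass c) = Nat.card (gclass c) :=
          Nat.card_image_of_injective (mul_right_injective x) _
        calc Nat.card (gclass c) = Nat.card ((x * ·) '' gclass c) := h2.symm
          _ ≤ Nat.card (gclass (x * y)) := by
              rw [Nat.card_coe_set_eq, Nat.card_coe_set_eq]
              exact Set.ncard_le_ncard hinj (Set.toFinite _)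
          _ = Nat.card (gclass b) := hD
      omega
  -- Step 2 : b • gclass c is conjugation invariant
  have step2 : ∀ g : G, ∀ w ∈ (b * ·) '' gclass c, g * w * g⁻¹ ∈ (b * ·) '' gclass c := by
    rintro g w ⟨y, hy, rfl⟩
    have hcopD := key b (gclass_self b) y hy
    obtain ⟨t, htb, htz⟩ := conj_absorb (x := b) (z := b * y) hcopD.symm g
    refine ⟨t * y * t⁻¹, gclass_conj_mem hy t, ?_⟩
    show b * (t * y * t⁻¹) = g * (b * y) * g⁻¹
    rw [htz, show t * (b * y) * t⁻¹ = (t * b * t⁻¹) * (t * y * t⁻¹) from by group, htb]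
  -- Step 3
  have step3 : ∀ x ∈ gclass b, (x * ·) '' gclass c = (b * ·) '' gclass c := by
    intro x hx
    have hsub : (x * ·) '' gclass c ⊆ (b * ·) '' gclass c := by
      obtain ⟨g, rfl⟩ := hx
      rintro w ⟨y, hy, rfl⟩
      have hmem : b * (g⁻¹ * y * g) ∈ (b * ·) '' gclass c :=
        ⟨g⁻¹ * y * g, by simpa using gclass_conj_mem hy g⁻¹, rfl⟩
      have h3 := step2 g _ hmem
      show (g * b * g⁻¹) * y ∈ (b * ·) '' gclass c
      rw [show (g * b * g⁻¹) * y = g * (b * (g⁻¹ * y * g)) * g⁻¹ from by group]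
      exact h3
    apply Set.eq_of_subset_of_ncard_le hsub _ (Set.toFinite _)
    apply le_of_eq
    rw [← Nat.card_coe_set_eq, ← Nat.card_coe_set_eq,
      Nat.card_image_of_injective (mul_right_injective b),
      Nat.card_image_of_injective (mul_right_injective x)]
  -- Step 4
  have step4 : gclass b * gclass c = (b * ·) '' gclass c := by
    apply Set.Subset.antisymm
    · rintro w hw
      obtain ⟨x, hx, y, hy, rfl⟩ := hw
      exact (step3 x hx) ▸ ⟨y, hy, rfl⟩
    · rintro w ⟨y, hy, rfl⟩
      exact Set.mul_mem_mul (gclass_self b) hy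
  have conc1 : Nat.card (gclass b * gclass c) = Nat.card (gclass c) := by
    rw [step4]
    exact Nat.card_image_of_injective (mul_right_injective b) _
  refine ⟨conc1, ?_⟩
  -- commuting: C x = x C
  have hcomm : ∀ x : G, (· * x) '' gclass c = (x * ·) '' gclass c := by
    intro x
    ext w
    constructor
    · rintro ⟨y, hy, rfl⟩
      exact ⟨x⁻¹ * y * x, by simpa using gclass_conj_mem hy x⁻¹, by show x * _ = _; group⟩
    · rintro ⟨y, hy, rfl⟩
      exact ⟨x * y * x⁻¹, gclass_conj_mem hy x, by show _ * x = _; group⟩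
  have hCx : ∀ x ∈ gclass b, (· * x) '' gclass c = (· * b) '' gclass c := by
    intro x hx
    rw [hcomm, hcomm, step3 x hx]
  apply Set.Subset.antisymm
  · rintro w hw
    obtain ⟨u, hu, v, hv, rfl⟩ := hw
    obtain ⟨y, hy, x, hx, rfl⟩ := hu
    have hvb : v⁻¹ ∈ gclass b := Set.mem_inv.mp hv
    have h1 : y * x ∈ (· * x) '' gclass c := ⟨y, hy, rfl⟩
    rw [hCx x hx, ← hCx v⁻¹ hvb] at h1
    obtain ⟨y2, hy2, heq⟩ := h1
    have heq' : y2 * v⁻¹ = y * x := heq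
    show y * x * v ∈ gclass c
    rw [← heq', inv_mul_cancel_right]
    exact hy2
  · intro y hy
    have hmem : y * b * b⁻¹ ∈ gclass c * gclass b * (gclass b)⁻¹ :=
      Set.mul_mem_mul (Set.mul_mem_mul hy (gclass_self b))
        (Set.mem_inv.mpr (by simpa using gclass_self b))
    rwa [show y * b * b⁻¹ = y from by group] at hmem
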